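/- Let M be a lattice path matroid of rank r. For every k with 0 ≤ k ≤ r − 1, M has at most k + 1 nontrivial connected flats of rank r − k. In particular, M has at most two connected hyperplanes (connected flats of rank r − 1) and at most r − 1 connected lines (nontrivial connected flats of rank 2). -/

import Mathlib

open Set
open scoped Matroid

namespace LPM

variable {α β : Type*}

/-- `I` is a partial transversal of the set family `N`: there is an injection
matching each element of `I` to an index of a member of the family containing it. -/
def IsPT {ι : Type*} (N : ι → Set α) (I : Set α) : Prop :=
  ∃ f : I → ι, Function.Injective f ∧ ∀ x : I, (x : α) ∈ N (f x)

/-- `I` is a (full) transversal of the set family `N`: there is a bijection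
matching each element of `I` to an index of a member of the family containing it. -/
def IsT {ι : Type*} (N : ι → Set α) (I : Set α) : Prop :=
  ∃ f : I → ι, Function.Bijective f ∧ ∀ x : I, (x : α) ∈ N (f x)

/-- A lattice path presentation with nullity `m` and rank `r`: a sequence of
intervals `[l i, g i] ⊆ {1, …, m + r}` whose left endpoints strictly increase
and whose right endpoints strictly increase. -/
structure LPP (m r : ℕ) where
  l : Fin r → ℕ
  g : Fin r → ℕ
  l_strictMono : StrictMono l
  g_strictMono : StrictMono g
  one_le_l : ∀ i, 1 ≤ l i
  l_le_g : ∀ i, l i ≤ g i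
  g_le : ∀ i, g i ≤ m + r

/-- The intervals of a lattice path presentation. -/
def LPP.N {m r : ℕ} (P : LPP m r) (i : Fin r) : Set ℕ := Set.Icc (P.l i) (P.g i)

/-- `M` is the lattice path matroid `M[N]` of the presentation `P`: the ground set
is `{1, …, m + r}` and the independent sets are exactly the partial transversals
of the intervals of `P`. -/
def IsLPMOf {m r : ℕ} (P : LPP m r) (M : Matroid ℕ) : Prop :=
  M.E = Set.Icc 1 (m + r) ∧
    ∀ I : Set ℕ, M.Indep I ↔ I ⊆ Set.Icc 1 (m + r) ∧ IsPT P.N I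

/-- `M` is isomorphic to `M'`: there is a bijection between the ground sets
carrying independent sets to independent sets in both directions. -/
def IsoTo (M : Matroid α) (M' : Matroid β) : Prop :=
  ∃ f : α → β, Set.BijOn f M.E M'.E ∧ ∀ I ⊆ M.E, (M.Indep I ↔ M'.Indep (f '' I))

/-- A lattice path matroid: a matroid isomorphic to `M[N]` for some lattice path
presentation (presentations with `r = 0` give the rank-zero matroids). -/
def IsLPMatroid (M : Matroid α) : Prop :=
  ∃ (m r : ℕ) (P : LPP m r) (M₀ : Matroid ℕ), IsLPMOf P M₀ ∧ IsoTo M M₀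

/-- A circuit of a matroid: a minimal dependent subset of the ground set. -/
def Circuit (M : Matroid α) (C : Set α) : Prop :=
  C ⊆ M.E ∧ ¬ M.Indep C ∧ ∀ D : Set α, D ⊂ C → M.Indep D

/-- A matroid is connected if every two distinct elements of the ground set lie
in a common circuit. -/
def Connected (M : Matroid α) : Prop :=
  ∀ x ∈ M.E, ∀ y ∈ M.E, x ≠ y → ∃ C, Circuit M C ∧ x ∈ C ∧ y ∈ C

/-- The rank of a set in a matroid: the supremum of the cardinalities of its
independent subsets. -/
noncomputable def rk (M : Matroid α) (X : Set α) : ℕ :=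
  sSup {n | ∃ I, I ⊆ X ∧ M.Indep I ∧ I.ncard = n}

/-- A nontrivial connected flat: a flat that is dependent and whose restriction
is a connected matroid. -/
def NTConnFlat (M : Matroid α) (X : Set α) : Prop :=
  M.IsFlat X ∧ ¬ M.Indep X ∧ Connected (M ↾ X)

/-- Deletion of a set from a matroid. -/
def delete (M : Matroid α) (D : Set α) : Matroid α := M ↾ (M.E \ D)

/-- Contraction of a set in a matroid, defined via duality. -/
def contract (M : Matroid α) (C : Set α) : Matroid α := (delete M✶ C)✶

/-- `Minor M' M` means that `M'` is obtained from `M` by a sequence of deletions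
and contractions. -/
inductive Minor : Matroid α → Matroid α → Prop
  | refl (M : Matroid α) : Minor M M
  | del {M' M : Matroid α} (D : Set α) (h : Minor M' M) : Minor (delete M' D) M
  | con {M' M : Matroid α} (C : Set α) (h : Minor M' M) : Minor (contract M' C) M

end LPM

/-!
In the presentation `M[N]`, Hall's theorem makes a set independent exactly when each of its
finite subsets `s` meets at least `|s|` intervals. A circuit `C` therefore meets fewer than `|C|`
intervals, and as every interval meeting `[min C, max C]` contains a point of `C`, so does that
window.
Hence a nontrivial connected flat `F`, which contains a circuit through `min F` and `max F`, is
the whole window `[min F, max F]`, and its rank is the number of intervals meeting that window.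
If this rank is `r - k`, at most `k` intervals end before `min F`, and that number determines
`F` among the connected flats of rank `r - k`. Isomorphisms preserve all the notions involved.
-/

namespace Matroid

variable {α β : Type*} {M : Matroid α} {f : α → β}

lemma IsCircuit.map {C : Set α} (hC : M.IsCircuit C) (hf : InjOn f M.E) :
    (M.map f hf).IsCircuit (f '' C) := by
  rw [isCircuit_iff_forall_ssubset] at hC ⊢
  refine ⟨map_dep_iff.2 ⟨C, hC.1, rfl⟩, fun J hJ => ?_⟩
  obtain ⟨I, hIC, rfl⟩ := subset_image_iff.1 hJ.subset
  exact (hC.2 (hIC.ssubset_of_ne (by rintro rfl; exact hJ.ne rfl))).map f hf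

lemma IsFlat.map {F : Set α} (hF : M.IsFlat F) (hf : InjOn f M.E) :
    (M.map f hf).IsFlat (f '' F) := by
  rw [isFlat_iff_closure_eq, map_closure_eq, ← closure_inter_ground,
    hf.preimage_image_inter hF.subset_ground, hF.closure]

end Matroid

namespace LPM

section

variable {α β : Type*} {M : Matroid α} {f : α → β} {C F I X : Set α}

lemma circuit_iff_isCircuit : Circuit M C ↔ M.IsCircuit C := by
  rw [Matroid.isCircuit_iff_forall_ssubset, Circuit, Matroid.Dep]
  tauto

lemma connected_restrict_iff (hF : F ⊆ M.E) :
    Connected (M ↾ F) ↔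
      ∀ x ∈ F, ∀ y ∈ F, x ≠ y →
        ∃ C, M.IsCircuit C ∧ C ⊆ F ∧ x ∈ C ∧ y ∈ C := by
  simp only [Connected, circuit_iff_isCircuit, Matroid.restrict_isCircuit_iff hF,
    Matroid.restrict_ground_eq, and_assoc]

lemma NTConnFlat.nonempty (hF : NTConnFlat M F) : F.Nonempty :=
  nonempty_iff_ne_empty.2 fun h => hF.2.1 (h ▸ M.empty_indep)

lemma NTConnFlat.exists_isCircuit (hF : NTConnFlat M F) {x y : α} (hx : x ∈ F) (hy : y ∈ F) :
    ∃ C, M.IsCircuit C ∧ C ⊆ F ∧ x ∈ C ∧ y ∈ C := by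
  have hconn := (connected_restrict_iff hF.1.subset_ground).1 hF.2.2
  rcases eq_or_ne x y with rfl | hxy
  · obtain ⟨C₀, hC₀F, hC₀⟩ :=
      (show M.Dep F from ⟨hF.2.1, hF.1.subset_ground⟩).exists_isCircuit_subset
    obtain ⟨z, hz⟩ := hC₀.nonempty
    rcases eq_or_ne x z with rfl | hxz
    · exact ⟨C₀, hC₀, hC₀F, hz, hz⟩
    · obtain ⟨C, hC, hCF, hxC, -⟩ := hconn x hx z (hC₀F hz) hxz
      exact ⟨C, hC, hCF, hxC, hxC⟩
  · exact hconn x hx y hy hxy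

lemma NTConnFlat.map (hF : NTConnFlat M F) (hf : InjOn f M.E) :
    NTConnFlat (M.map f hf) (f '' F) := by
  have hFE := hF.1.subset_ground
  refine ⟨hF.1.map hf, fun h => hF.2.1 ((Matroid.map_image_indep_iff hFE).1 h), ?_⟩
  rw [connected_restrict_iff (image_mono hFE)]
  rintro _ ⟨x, hx, rfl⟩ _ ⟨y, hy, rfl⟩ hxy
  obtain ⟨C, hC, hCF, hxC, hyC⟩ := hF.exists_isCircuit hx hy
  exact ⟨f '' C, hC.map hf, image_mono hCF, mem_image_of_mem f hxC, mem_image_of_mem f hyC⟩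

lemma IsoTo.exists_map_eq {M₀ : Matroid β} (h : IsoTo M M₀) :
    ∃ (f : α → β) (hf : InjOn f M.E), M.map f hf = M₀ := by
  obtain ⟨f, hbij, hind⟩ := h
  refine ⟨f, hbij.injOn, Matroid.ext_indep hbij.image_eq fun J hJ => ?_⟩
  rw [Matroid.map_indep_iff]
  constructor
  · rintro ⟨I, hI, rfl⟩
    exact (hind I hI.subset_ground).1 hI
  · intro hJind
    have hJ' : f '' (f ⁻¹' J ∩ M.E) = J := by
      rw [image_preimage_inter]
      exact inter_eq_left.2 hJ
    exact ⟨_, (hind _ inter_subset_right).2 (by rwa [hJ']), hJ'.symm⟩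

lemma rk_map_image (hf : InjOn f M.E) (hX : X ⊆ M.E) : rk (M.map f hf) (f '' X) = rk M X := by
  unfold rk
  congr 1
  ext n
  simp only [Matroid.map_indep_iff]
  constructor
  · rintro ⟨_, hJX, ⟨I, hI, rfl⟩, rfl⟩
    exact ⟨I, (hf.image_subset_image_iff hI.subset_ground hX).1 hJX, hI,
      (hf.mono hI.subset_ground).ncard_image.symm⟩
  · rintro ⟨I, hIX, hI, rfl⟩
    exact ⟨f '' I, image_mono hIX, ⟨I, hI, rfl⟩, (hf.mono hI.subset_ground).ncard_image⟩

lemma rk_le {n : ℕ} (h : ∀ I ⊆ X, M.Indep I → I.ncard ≤ n) : rk M X ≤ n :=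
  csSup_le ⟨0, ∅, empty_subset X, M.empty_indep, ncard_empty α⟩
    (by rintro _ ⟨I, hIX, hI, rfl⟩; exact h I hIX hI)

section Finite

variable [M.Finite]

lemma bddAbove_ncard_indep_subset (X : Set α) :
    BddAbove {n | ∃ I, I ⊆ X ∧ M.Indep I ∧ I.ncard = n} :=
  bddAbove_def.2 ⟨M.E.ncard, by
    rintro _ ⟨I, -, hI, rfl⟩
    exact ncard_le_ncard hI.subset_ground M.ground_finite⟩

lemma ncard_le_rk (hI : M.Indep I) (hIX : I ⊆ X) : I.ncard ≤ rk M X :=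
  le_csSup (bddAbove_ncard_indep_subset X) ⟨I, hIX, hI, rfl⟩

lemma exists_indep_ncard_eq_rk (X : Set α) : ∃ I ⊆ X, M.Indep I ∧ I.ncard = rk M X :=
  Nat.sSup_mem (s := {n | ∃ I, I ⊆ X ∧ M.Indep I ∧ I.ncard = n})
    ⟨0, ∅, empty_subset X, M.empty_indep, ncard_empty α⟩ (bddAbove_ncard_indep_subset X)

lemma ncard_le_rk_add_one_of_isCircuit (hC : M.IsCircuit C) (hCX : C ⊆ X) :
    C.ncard ≤ rk M X + 1 := by
  obtain ⟨e, he⟩ := hC.nonempty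
  have := ncard_le_rk (hC.sdiff_singleton_indep he) (sdiff_subset.trans hCX)
  rw [ncard_sdiff_singleton_of_mem he] at this
  omega

lemma subset_of_isFlat_of_rk_le (hF : M.IsFlat F) (hFX : F ⊆ X) (hXE : X ⊆ M.E)
    (hrk : rk M X ≤ rk M F) : X ⊆ F := by
  intro x hxX
  by_contra hxF
  obtain ⟨I, hIF, hI, hIcard⟩ := exists_indep_ncard_eq_rk (M := M) F
  have hxI : x ∉ I := fun h => hxF (hIF h)
  have hxcl : x ∉ M.closure I := fun h => hxF (hF.closure ▸ M.closure_subset_closure hIF h)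
  have hins := ncard_le_rk ((hI.insert_indep_iff_of_notMem hxI).2 ⟨hXE hxX, hxcl⟩)
    (insert_subset hxX (hIF.trans hFX))
  rw [ncard_insert_of_notMem hxI (M.ground_finite.subset hI.subset_ground)] at hins
  omega

end Finite

theorem isPT_iff_forall_card_le_card_biUnion {ι : Type*} [DecidableEq ι] {N : ι → Set α}
    {t : α → Finset ι} (ht : ∀ x i, i ∈ t x ↔ x ∈ N i) :
    IsPT N I ↔ ∀ s : Finset α, ↑s ⊆ I → s.card ≤ (s.biUnion t).card := by
  classical
  simp only [IsPT, ← ht]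
  rw [← Finset.all_card_le_biUnion_card_iff_exists_injective (fun x : I => t x)]
  constructor
  · intro h s hs
    obtain ⟨s', -, rfl⟩ := Finset.subset_set_image_iff.1
      (show (s : Set α) ⊆ Subtype.val '' (univ : Set I) by simpa using hs)
    simpa [Finset.image_biUnion, Finset.card_image_of_injective _ Subtype.val_injective]
      using h s'
  · intro h s
    simpa [Finset.image_biUnion, Finset.card_image_of_injective _ Subtype.val_injective]
      using h (s.image Subtype.val) (by simp)

end

namespace LPP

variable {m r : ℕ} (P : LPP m r)

def intervalsAt (x : ℕ) : Finset (Fin r) :=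
  Finset.univ.filter fun i => P.l i ≤ x ∧ x ≤ P.g i

def intervalsMeeting (a b : ℕ) : Finset (Fin r) :=
  Finset.univ.filter fun i => a ≤ P.g i ∧ P.l i ≤ b

def intervalsBefore (a : ℕ) : Finset (Fin r) :=
  Finset.univ.filter fun i => P.g i < a

lemma mem_intervalsAt_iff (x : ℕ) (i : Fin r) : i ∈ P.intervalsAt x ↔ x ∈ P.N i := by
  simp [intervalsAt, N]

lemma biUnion_intervalsAt_subset_intervalsMeeting {s : Finset ℕ} {a b : ℕ}
    (hs : ↑s ⊆ Icc a b) : s.biUnion P.intervalsAt ⊆ P.intervalsMeeting a b := by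
  intro i hi
  simp only [Finset.mem_biUnion, intervalsAt, intervalsMeeting, Finset.mem_filter,
    Finset.mem_univ, true_and] at hi ⊢
  obtain ⟨x, hx, hlx, hxg⟩ := hi
  have := hs hx
  simp only [mem_Icc] at this
  omega

lemma disjoint_biUnion_intervalsAt {i : Fin r} {s₁ s₂ : Finset ℕ}
    (h₁ : ∀ x ∈ s₁, x < P.l i) (h₂ : ∀ y ∈ s₂, P.g i < y) :
    Disjoint (s₁.biUnion P.intervalsAt) (s₂.biUnion P.intervalsAt) := by
  simp only [Finset.disjoint_left, Finset.mem_biUnion, intervalsAt, Finset.mem_filter,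
    Finset.mem_univ, true_and]
  rintro j ⟨x, hx, hlj, -⟩ ⟨y, hy, -, hgj⟩
  have hji : j < i := P.l_strictMono.lt_iff_lt.1 (hlj.trans_lt (h₁ x hx))
  have hij : i < j := P.g_strictMono.lt_iff_lt.1 ((h₂ y hy).trans_le hgj)
  exact lt_asymm hji hij

lemma card_intervalsBefore_add_card_intervalsMeeting_le (a b : ℕ) :
    (P.intervalsBefore a).card + (P.intervalsMeeting a b).card ≤ r := by
  unfold intervalsBefore intervalsMeeting
  rw [← Finset.card_union_of_disjoint (Finset.disjoint_filter.2 fun i _ h h' => by omega)]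
  exact (Finset.card_le_univ _).trans_eq (Fintype.card_fin r)

end LPP

namespace IsLPMOf

variable {m r : ℕ} {P : LPP m r} {M₀ : Matroid ℕ} (hM₀ : IsLPMOf P M₀)
include hM₀

lemma finite : M₀.Finite :=
  ⟨hM₀.1 ▸ finite_Icc _ _⟩

lemma card_le_card_biUnion {I : Set ℕ} (hI : M₀.Indep I) {s : Finset ℕ} (hs : ↑s ⊆ I) :
    s.card ≤ (s.biUnion P.intervalsAt).card :=
  (isPT_iff_forall_card_le_card_biUnion P.mem_intervalsAt_iff).1 ((hM₀.2 I).1 hI).2 s hs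

lemma exists_card_biUnion_lt_of_isCircuit {C : Set ℕ} (hC : M₀.IsCircuit C) :
    ∃ s : Finset ℕ, ↑s = C ∧ (s.biUnion P.intervalsAt).card < s.card := by
  have hnPT : ¬ IsPT P.N C := fun h =>
    hC.not_indep ((hM₀.2 C).2 ⟨hM₀.1 ▸ hC.subset_ground, h⟩)
  rw [isPT_iff_forall_card_le_card_biUnion P.mem_intervalsAt_iff] at hnPT
  push Not at hnPT
  obtain ⟨s, hsC, hlt⟩ := hnPT
  exact ⟨s, hC.eq_of_not_indep_subset
    (fun hs => hlt.not_ge (hM₀.card_le_card_biUnion hs subset_rfl)) hsC, hlt⟩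

lemma ncard_le_card_intervalsMeeting {I : Set ℕ} {a b : ℕ} (hI : M₀.Indep I)
    (hIab : I ⊆ Icc a b) : I.ncard ≤ (P.intervalsMeeting a b).card := by
  obtain ⟨s, rfl⟩ := ((finite_Icc a b).subset hIab).exists_finset_coe
  rw [ncard_coe_finset]
  exact (hM₀.card_le_card_biUnion hI subset_rfl).trans
    (Finset.card_le_card (P.biUnion_intervalsAt_subset_intervalsMeeting hIab))

lemma rk_le_card_intervalsMeeting {X : Set ℕ} {a b : ℕ} (hX : X ⊆ Icc a b) :
    rk M₀ X ≤ (P.intervalsMeeting a b).card :=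
  rk_le fun _ hIX hI => hM₀.ncard_le_card_intervalsMeeting hI (hIX.trans hX)

/-- An interval meeting `[a, b]` but missing `C` would split `C` into its parts below and above
that interval; these are independent and meet disjoint sets of intervals, so `C` would satisfy
Hall's condition. -/
lemma card_intervalsMeeting_lt_ncard {C : Set ℕ} {a b : ℕ} (hC : M₀.IsCircuit C)
    (ha : a ∈ C) (hb : b ∈ C) : (P.intervalsMeeting a b).card < C.ncard := by
  obtain ⟨s, rfl, hlt⟩ := hM₀.exists_card_biUnion_lt_of_isCircuit hC
  rw [ncard_coe_finset]
  refine lt_of_le_of_lt (Finset.card_le_card fun i hi => ?_) hlt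
  by_contra hi'
  simp only [LPP.intervalsMeeting, LPP.intervalsAt, Finset.mem_filter, Finset.mem_univ,
    true_and, Finset.mem_biUnion, not_exists, not_and] at hi hi'
  set s₁ := s.filter (· < P.l i)
  set s₂ := s.filter (P.g i < ·)
  have hs : s = s₁ ∪ s₂ := by
    ext x
    simp only [s₁, s₂, Finset.mem_union, Finset.mem_filter]
    have := hi' x
    constructor
    · intro hx
      by_cases h : x < P.l i
      · exact Or.inl ⟨hx, h⟩
      · exact Or.inr ⟨hx, by have := this hx; omega⟩
    · rintro (⟨hx, -⟩ | ⟨hx, -⟩) <;> exact hx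
  have h₁ : (s₁ : Set ℕ) ⊂ s := Finset.coe_ssubset.2 <| Finset.filter_ssubset.2
    ⟨b, Finset.mem_coe.1 hb, by omega⟩
  have h₂ : (s₂ : Set ℕ) ⊂ s := Finset.coe_ssubset.2 <| Finset.filter_ssubset.2
    ⟨a, Finset.mem_coe.1 ha, by omega⟩
  have hdisj := P.disjoint_biUnion_intervalsAt (s₁ := s₁) (s₂ := s₂) (i := i)
    (fun x hx => (Finset.mem_filter.1 hx).2) (fun y hy => (Finset.mem_filter.1 hy).2)
  refine hlt.not_ge ?_
  calc s.card ≤ s₁.card + s₂.card := hs ▸ Finset.card_union_le _ _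
    _ ≤ (s₁.biUnion P.intervalsAt).card + (s₂.biUnion P.intervalsAt).card :=
      add_le_add (hM₀.card_le_card_biUnion (hC.ssubset_indep h₁) subset_rfl)
        (hM₀.card_le_card_biUnion (hC.ssubset_indep h₂) subset_rfl)
    _ = (s.biUnion P.intervalsAt).card := by
      rw [hs, Finset.union_biUnion, Finset.card_union_of_disjoint hdisj]

lemma rk_ground : rk M₀ M₀.E = r := by
  have := hM₀.finite
  refine le_antisymm ((hM₀.rk_le_card_intervalsMeeting hM₀.1.subset).trans
    ((Finset.card_le_univ _).trans_eq (Fintype.card_fin r))) ?_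
  have hl : range P.l ⊆ Icc 1 (m + r) :=
    range_subset_iff.2 fun i => ⟨P.one_le_l i, (P.l_le_g i).trans (P.g_le i)⟩
  have hind : M₀.Indep (range P.l) := (hM₀.2 _).2 ⟨hl, rangeSplitting P.l,
    rangeSplitting_injective P.l, fun x => by
      have hx := apply_rangeSplitting P.l x
      exact ⟨hx.le, hx ▸ P.l_le_g _⟩⟩
  calc r = (range P.l).ncard := by
        rw [ncard_range_of_injective P.l_strictMono.injective, Nat.card_fin]
    _ ≤ rk M₀ M₀.E := ncard_le_rk hind (hM₀.1 ▸ hl)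

lemma eq_Icc_of_ntConnFlat {F : Set ℕ} (hF : NTConnFlat M₀ F) :
    F = Icc (sInf F) (sSup F) ∧ (P.intervalsMeeting (sInf F) (sSup F)).card = rk M₀ F := by
  have := hM₀.finite
  have hFE := hF.1.subset_ground
  have hbdd := (M₀.ground_finite.subset hFE).bddAbove
  have ha : sInf F ∈ F := Nat.sInf_mem hF.nonempty
  have hb : sSup F ∈ F := Nat.sSup_mem hF.nonempty hbdd
  have hFab : F ⊆ Icc (sInf F) (sSup F) := fun x hx => ⟨Nat.sInf_le hx, le_csSup hbdd hx⟩
  obtain ⟨C, hC, hCF, haC, hbC⟩ := hF.exists_isCircuit ha hb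
  have hrk : (P.intervalsMeeting (sInf F) (sSup F)).card = rk M₀ F := by
    have h₁ := hM₀.card_intervalsMeeting_lt_ncard hC haC hbC
    have h₂ := ncard_le_rk_add_one_of_isCircuit hC hCF
    exact le_antisymm (by omega) (hM₀.rk_le_card_intervalsMeeting hFab)
  have hIccE : Icc (sInf F) (sSup F) ⊆ M₀.E := by
    have ha' := hFE ha
    have hb' := hFE hb
    rw [hM₀.1] at ha' hb' ⊢
    exact Icc_subset_Icc ha'.1 hb'.2
  refine ⟨hFab.antisymm (subset_of_isFlat_of_rk_le hF.1 hFab hIccE ?_), hrk⟩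
  exact (hM₀.rk_le_card_intervalsMeeting subset_rfl).trans hrk.le

/-- If no interval ends in `[sInf F, sInf F')`, the window `[sInf F, sSup F']` meets exactly the
intervals meeting `F'`, so its rank is at most `rk F` and it lies in the flat `F`. -/
lemma eq_of_card_intervalsBefore_eq {F F' : Set ℕ} (hF : NTConnFlat M₀ F)
    (hF' : NTConnFlat M₀ F') (hrk : rk M₀ F' = rk M₀ F) (hle : sInf F ≤ sInf F')
    (hbefore : (P.intervalsBefore (sInf F)).card = (P.intervalsBefore (sInf F')).card) :
    F = F' := by
  have := hM₀.finite
  suffices h : F' ⊆ F from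
    (subset_of_isFlat_of_rk_le hF'.1 h hF.1.subset_ground hrk.ge).antisymm h
  obtain ⟨hFeq, -⟩ := hM₀.eq_Icc_of_ntConnFlat hF
  obtain ⟨hF'eq, hF'rk⟩ := hM₀.eq_Icc_of_ntConnFlat hF'
  have hsame : P.intervalsBefore (sInf F) = P.intervalsBefore (sInf F') :=
    Finset.eq_of_subset_of_card_le (fun i hi => by
      simp only [LPP.intervalsBefore, Finset.mem_filter, Finset.mem_univ, true_and] at hi ⊢
      omega) hbefore.ge
  have hmeet :
      P.intervalsMeeting (sInf F) (sSup F') = P.intervalsMeeting (sInf F') (sSup F') := by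
    ext i
    have := congrArg (i ∈ ·) hsame
    simp only [LPP.intervalsBefore, LPP.intervalsMeeting, Finset.mem_filter, Finset.mem_univ,
      true_and, eq_iff_iff] at this ⊢
    omega
  rcases le_total (sSup F') (sSup F) with hb | hb
  · rw [hF'eq, hFeq]
    exact Icc_subset_Icc hle hb
  · have hX : Icc (sInf F) (sSup F') ⊆ M₀.E := by
      have ha' := hF.1.subset_ground (Nat.sInf_mem hF.nonempty)
      have hb' := hF'.1.subset_ground
        (Nat.sSup_mem hF'.nonempty (M₀.ground_finite.subset hF'.1.subset_ground).bddAbove)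
      rw [hM₀.1] at ha' hb' ⊢
      exact Icc_subset_Icc ha'.1 hb'.2
    refine (hF'eq.trans_subset (Icc_subset_Icc_left hle)).trans
      (subset_of_isFlat_of_rk_le hF.1 (hFeq.trans_subset (Icc_subset_Icc_right hb)) hX ?_)
    calc rk M₀ (Icc (sInf F) (sSup F')) ≤ (P.intervalsMeeting (sInf F) (sSup F')).card :=
          hM₀.rk_le_card_intervalsMeeting subset_rfl
      _ = rk M₀ F' := hmeet ▸ hF'rk
      _ = rk M₀ F := hrk

theorem finite_and_ncard_ntConnFlats_le (ρ : ℕ) :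
    {F | NTConnFlat M₀ F ∧ rk M₀ F = ρ}.Finite ∧
      {F | NTConnFlat M₀ F ∧ rk M₀ F = ρ}.ncard ≤ r - ρ + 1 := by
  have hmaps : MapsTo (fun F => (P.intervalsBefore (sInf F)).card)
      {F | NTConnFlat M₀ F ∧ rk M₀ F = ρ} ↑(Finset.range (r - ρ + 1)) := by
    rintro F ⟨hF, rfl⟩
    have := P.card_intervalsBefore_add_card_intervalsMeeting_le (sInf F) (sSup F)
    rw [(hM₀.eq_Icc_of_ntConnFlat hF).2] at this
    simp only [Finset.coe_range, mem_Iio]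
    omega
  have hinj : InjOn (fun F => (P.intervalsBefore (sInf F)).card)
      {F | NTConnFlat M₀ F ∧ rk M₀ F = ρ} := by
    rintro F ⟨hF, hFρ⟩ F' ⟨hF', hF'ρ⟩ hbefore
    wlog hle : sInf F ≤ sInf F' generalizing F F'
    · exact (this hF' hF'ρ hF hFρ hbefore.symm (le_of_not_ge hle)).symm
    exact hM₀.eq_of_card_intervalsBefore_eq hF hF' (hF'ρ.trans hFρ.symm) hle hbefore
  refine ⟨Finite.of_injOn hmaps hinj (Finset.finite_toSet _), ?_⟩
  calc _ ≤ (↑(Finset.range (r - ρ + 1)) : Set ℕ).ncard :=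
        ncard_le_ncard_of_injOn _ hmaps hinj
    _ = r - ρ + 1 := by rw [ncard_coe_finset, Finset.card_range]

end IsLPMOf

end LPM

open LPM in
theorem stmt14_general {α : Type*} (M : Matroid α) (hM : IsLPMatroid M)
    (r : ℕ) (hr : rk M M.E = r)
    (k : ℕ) :
    {F : Set α | NTConnFlat M F ∧ rk M F = r - k}.Finite ∧
      {F : Set α | NTConnFlat M F ∧ rk M F = r - k}.ncard ≤ k + 1 := by
  obtain ⟨m, r', P, M₀, hM₀, hiso⟩ := hM
  obtain ⟨f, hf, rfl⟩ := hiso.exists_map_eq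
  obtain rfl : r' = r := by
    rw [← hr, ← rk_map_image hf subset_rfl]
    exact hM₀.rk_ground.symm
  have hmaps : MapsTo (image f) {F | NTConnFlat M F ∧ rk M F = r' - k}
      {F | NTConnFlat (M.map f hf) F ∧ rk (M.map f hf) F = r' - k} :=
    fun F ⟨hF, hrk⟩ => ⟨hF.map hf, (rk_map_image hf hF.1.subset_ground).trans hrk⟩
  have hinj : InjOn (image f) {F | NTConnFlat M F ∧ rk M F = r' - k} := fun F hF F' hF' =>
    (hf.image_eq_image_iff hF.1.1.subset_ground hF'.1.1.subset_ground).1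
  obtain ⟨hfin, hcard⟩ := hM₀.finite_and_ncard_ntConnFlats_le (r' - k)
  exact ⟨hfin.of_injOn hmaps hinj, (ncard_le_ncard_of_injOn _ hmaps hinj hfin).trans (by omega)⟩

open LPM in
/-- A lattice path matroid of rank `r` has at most `k + 1`
nontrivial connected flats of rank `r − k`, for every `0 ≤ k ≤ r − 1`. -/
theorem stmt14 {α : Type*} (M : Matroid α) (hM : IsLPMatroid M)
    (r : ℕ) (hr1 : 1 ≤ r) (hr : rk M M.E = r)
    (k : ℕ) (hk : k ≤ r - 1) :
    {F : Set α | NTConnFlat M F ∧ rk M F = r - k}.Finite ∧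
      {F : Set α | NTConnFlat M F ∧ rk M F = r - k}.ncard ≤ k + 1 :=
  stmt14_general M hM r hr k
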